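/- arXiv:2210.00258 — 4 statements merged into one kernel-verified Lean document; each statement's English description precedes it below -/
import Mathlib

section
/- Strong duality for MDPs (Theorem 3.2(ii)): Define ξ* = (ξ_t^*)_{t=1,…,H} ∈ Ξ by ξ_{t+1}^*(a_{<t+1}) := V_{t+1}^*(S_{t+1}(a_{<t+1})) − E_{S' ∼ P_{t+1}(·|S_t(a_{<t}),a_t)}[ V_{t+1}^*(S') ] for t = 0,…,H−1. Then almost surely V_0^*(x_0) = sup_{a ∈ A^H} ( Σ_{t=0}^{H−1} ( R_t(S_t(a_{<t}),a_t) − ξ_{t+1}^*(a_{<t+1}) ) + F(S_H(a_{<H})) ); in particular the pathwise supremum of the penalized reward has zero variance and equals V_0^*(x_0). -/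
open MeasureTheory ProbabilityTheory

/-- **Strong duality for MDPs (Theorem 3.2 (ii)).**
With the optimal penalties
`ξ⋆_{t+1}(a_{<t+1}) = V⋆_{t+1}(S_{t+1}(a_{<t+1})) − E_{S' ∼ P_{t+1}(·|S_t(a_{<t}), a_t)}[V⋆_{t+1}(S')]`,
the pathwise penalized reward
`sup_{a ∈ A^H} ( Σ_{t<H} (R_t(S_t(a_{<t}), a_t) − ξ⋆_{t+1}(a_{<t+1})) + F(S_H(a_{<H})) )`
equals `V₀⋆(x₀)` almost surely; in particular it has zero variance. -/
theorem strong_duality_mdp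
    {S A : Type*} [MeasurableSpace S] [Nonempty A]
    {Ω : Type*} [mΩ : MeasurableSpace Ω]
    (μ : Measure Ω) [IsProbabilityMeasure μ]
    (H : ℕ) (x₀ : S)
    -- transition kernels
    (P : ℕ → S → A → Measure S) (hP : ∀ t y a, IsProbabilityMeasure (P t y a))
    -- bounded rewards and terminal reward
    (R : ℕ → S → A → ℝ) (F : S → ℝ) (Rmax : ℝ) (hRmax : 0 ≤ Rmax)
    (hRb : ∀ t y a, |R t y a| ≤ Rmax) (hFb : ∀ y, |F y| ≤ Rmax)
    -- the optimal value functions, given by the Bellman recursion, and bounded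
    (Vstar : ℕ → S → ℝ)
    (hVstarH : ∀ y, Vstar H y = F y)
    (hBell : ∀ h, h < H → ∀ y,
      Vstar h y = ⨆ a : A, (R h y a + ∫ z, Vstar (h + 1) z ∂(P (h + 1) y a)))
    (hVb : ∀ h y, |Vstar h y| ≤ ((H : ℝ) + 1) * Rmax)
    -- the controlled chain for deterministic action vectors
    (Schain : ℕ → (ℕ → A) → Ω → S)
    (hS0 : ∀ a ω, Schain 0 a ω = x₀)
    (hScausal : ∀ t (a a' : ℕ → A), (∀ i, i < t → a i = a' i) → Schain t a = Schain t a')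
    -- the optimal penalties ξ⋆ ∈ Ξ
    (ξstar : ℕ → (ℕ → A) → Ω → ℝ)
    (hξstar : ∀ t (a : ℕ → A) ω, ξstar (t + 1) a ω
      = Vstar (t + 1) (Schain (t + 1) a ω)
        - ∫ z, Vstar (t + 1) z ∂(P (t + 1) (Schain t a ω) (a t))) :
    (∀ᵐ ω ∂μ,
      (⨆ a : ℕ → A,
        (∑ t ∈ Finset.range H, (R t (Schain t a ω) (a t) - ξstar (t + 1) a ω)
          + F (Schain H a ω))) = Vstar 0 x₀) ∧
    variance (fun ω => ⨆ a : ℕ → A,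
        (∑ t ∈ Finset.range H, (R t (Schain t a ω) (a t) - ξstar (t + 1) a ω)
          + F (Schain H a ω))) μ = 0 := by
  classical
  haveI : Nonempty (ℕ → A) := ⟨fun _ => Classical.arbitrary A⟩
  -- bound on the integrals of Vstar
  have hIb : ∀ t (y : S) (b : A), |∫ z, Vstar t z ∂(P t y b)| ≤ ((H : ℝ) + 1) * Rmax := by
    intro t y b
    haveI := hP t y b
    have h := norm_integral_le_of_norm_le_const (μ := P t y b) (C := ((H : ℝ) + 1) * Rmax)
      (f := fun z => Vstar t z)
      (Filter.Eventually.of_forall fun z => by simpa [Real.norm_eq_abs] using hVb t z)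
    simpa [Real.norm_eq_abs, measure_univ] using h
  -- boundedness above of the Bellman objective
  have hBdd : ∀ t (y : S), BddAbove (Set.range fun b : A =>
      R t y b + ∫ z, Vstar (t + 1) z ∂(P (t + 1) y b)) := by
    intro t y
    refine ⟨Rmax + ((H : ℝ) + 1) * Rmax, ?_⟩
    rintro _ ⟨b, rfl⟩
    have h1 := (abs_le.mp (hRb t y b)).2
    have h2 := (abs_le.mp (hIb (t + 1) y b)).2
    exact add_le_add h1 h2
  -- each Bellman summand is ≤ Vstar
  have hle : ∀ t, t < H → ∀ (y : S) (b : A),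
      R t y b + ∫ z, Vstar (t + 1) z ∂(P (t + 1) y b) ≤ Vstar t y := by
    intro t ht y b
    rw [hBell t ht y]
    exact le_ciSup (hBdd t y) b
  -- the pointwise identity
  have key : ∀ ω : Ω,
      (⨆ a : ℕ → A,
        (∑ t ∈ Finset.range H, (R t (Schain t a ω) (a t) - ξstar (t + 1) a ω)
          + F (Schain H a ω))) = Vstar 0 x₀ := by
    intro ω
    set G : (ℕ → A) → ℝ := fun a =>
      ∑ t ∈ Finset.range H, (R t (Schain t a ω) (a t) - ξstar (t + 1) a ω)
        + F (Schain H a ω) with hG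
    set D : (ℕ → A) → ℕ → ℝ := fun a t =>
      R t (Schain t a ω) (a t)
        + (∫ z, Vstar (t + 1) z ∂(P (t + 1) (Schain t a ω) (a t)))
        - Vstar t (Schain t a ω) with hD
    have hdecomp : ∀ a : ℕ → A, G a = Vstar 0 x₀ + ∑ t ∈ Finset.range H, D a t := by
      intro a
      have h1 : ∀ t, R t (Schain t a ω) (a t) - ξstar (t + 1) a ω
          = D a t + (Vstar t (Schain t a ω) - Vstar (t + 1) (Schain (t + 1) a ω)) := by
        intro t
        rw [hξstar, hD]
        ring
      simp only [hG, h1]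
      rw [Finset.sum_add_distrib, Finset.sum_range_sub'
        (f := fun t => Vstar t (Schain t a ω))]
      rw [hS0 a ω, ← hVstarH (Schain H a ω)]
      ring
    have hDle : ∀ (a : ℕ → A) t, t < H → D a t ≤ 0 := by
      intro a t ht
      have := hle t ht (Schain t a ω) (a t)
      simp only [hD]
      linarith
    have hGle : ∀ a : ℕ → A, G a ≤ Vstar 0 x₀ := by
      intro a
      rw [hdecomp a]
      have : ∑ t ∈ Finset.range H, D a t ≤ 0 :=
        Finset.sum_nonpos fun t ht => hDle a t (Finset.mem_range.mp ht)
      linarith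
    have hGbdd : BddAbove (Set.range G) := ⟨Vstar 0 x₀, by rintro _ ⟨a, rfl⟩; exact hGle a⟩
    refine le_antisymm (ciSup_le hGle) ?_
    refine le_of_forall_sub_le fun ε hε => ?_
    set δ : ℝ := ε / ((H : ℝ) + 1) with hδ
    have hδpos : 0 < δ := by positivity
    -- near-optimal greedy choice
    have spec : ∀ t, t < H → ∀ y : S, ∃ b : A,
        Vstar t y - δ < R t y b + ∫ z, Vstar (t + 1) z ∂(P (t + 1) y b) := by
      intro t ht y
      have h : Vstar t y - δ
          < ⨆ b : A, (R t y b + ∫ z, Vstar (t + 1) z ∂(P (t + 1) y b)) := by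
        rw [← hBell t ht y]; linarith
      exact exists_lt_of_lt_ciSup h
    set pickf : ℕ → S → A := fun t y =>
      if ht : t < H then Classical.choose (spec t ht y) else Classical.arbitrary A
      with hpickf
    have hpick : ∀ t (ht : t < H) (y : S),
        Vstar t y - δ < R t y (pickf t y)
          + ∫ z, Vstar (t + 1) z ∂(P (t + 1) y (pickf t y)) := by
      intro t ht y
      simp only [hpickf, dif_pos ht]
      exact Classical.choose_spec (spec t ht y)
    set f : ℕ → ℕ → A := Nat.rec (fun _ => Classical.arbitrary A)
      (fun t ft => Function.update ft t (pickf t (Schain t ft ω))) with hf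
    have hfsucc : ∀ t, f (t + 1) = Function.update (f t) t (pickf t (Schain t (f t) ω)) :=
      fun t => rfl
    set a : ℕ → A := fun t => f (t + 1) t with ha
    have hfa : ∀ t i, i < t → f t i = a i := by
      intro t
      induction t with
      | zero => intro i h; omega
      | succ t ih =>
        intro i h
        rcases Nat.lt_succ_iff_lt_or_eq.mp h with h' | h'
        · rw [hfsucc t, Function.update_of_ne (by omega)]
          exact ih i h'
        · subst h'; rfl
    have hchain : ∀ t, Schain t a = Schain t (f t) :=
      fun t => (hScausal t (f t) a fun i hi => hfa t i hi).symm
    have hat : ∀ t, a t = pickf t (Schain t (f t) ω) := by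
      intro t
      show f (t + 1) t = _
      rw [hfsucc t, Function.update_self]
    have hDge : ∀ t, t < H → -δ ≤ D a t := by
      intro t ht
      have := hpick t ht (Schain t (f t) ω)
      simp only [hD, hchain t, hat t]
      linarith
    have hsum : Vstar 0 x₀ - ε ≤ G a := by
      rw [hdecomp a]
      have h1 : ∑ t ∈ Finset.range H, (-δ) ≤ ∑ t ∈ Finset.range H, D a t :=
        Finset.sum_le_sum fun t ht => hDge t (Finset.mem_range.mp ht)
      have h2 : ∑ t ∈ Finset.range H, (-δ) = -((H : ℝ) * δ) := by
        simp [mul_comm]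
      have h3 : (H : ℝ) * δ ≤ ε := by
        have hH1 : (0 : ℝ) < (H : ℝ) + 1 := by positivity
        rw [hδ, mul_comm, div_mul_eq_mul_div, div_le_iff₀ hH1]
        nlinarith [Nat.cast_nonneg (α := ℝ) H]
      linarith
    exact hsum.trans (le_ciSup hGbdd a)
  constructor
  · exact Filter.Eventually.of_forall key
  · have hconst : (fun ω => ⨆ a : ℕ → A,
        (∑ t ∈ Finset.range H, (R t (Schain t a ω) (a t) - ξstar (t + 1) a ω)
          + F (Schain H a ω))) = fun _ => Vstar 0 x₀ := funext key
    rw [hconst]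
    simp [ProbabilityTheory.variance, ProbabilityTheory.evariance, integral_const,
      measure_univ]
end

section
/- Pathwise surmartingale inequality underlying strong duality: With ξ_{t+1}^*(a_{<t+1}) := V_{t+1}^*(S_{t+1}(a_{<t+1})) − E_{S' ∼ P_{t+1}(·|S_t(a_{<t}),a_t)}[V_{t+1}^*(S')], one has for every deterministic action vector a ∈ A^H, almost surely, Σ_{t=0}^{H−1} ( R_t(S_t(a_{<t}),a_t) − ξ_{t+1}^*(a_{<t+1}) ) + F(S_H(a_{<H})) = V_0^*(x) + Δ(x) with Δ(x) := F(S_H(a_{<H})) − V_H^*(S_H(a_{<H})) + Σ_{t=0}^{H−1} ( R_t(S_t(a_{<t}),a_t) + E_{S' ∼ P_{t+1}(·|S_t,a_t)}[V_{t+1}^*(S')] − V_t^*(S_t(a_{<t})) ) ≤ 0; in particular the penalized reward is almost surely at most V_0^*(x). -/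
open MeasureTheory ProbabilityTheory

/-- **Pathwise supermartingale inequality underlying strong duality.**
With the optimal penalties
`ξ⋆_{t+1}(a_{<t+1}) = V⋆_{t+1}(S_{t+1}(a_{<t+1})) − E_{S' ∼ P_{t+1}(·|S_t(a_{<t}), a_t)}[V⋆_{t+1}(S')]`,
for every deterministic action vector `a ∈ A^H`, almost surely the penalized
reward equals `V₀⋆(x) + Δ(x)` with `Δ(x) ≤ 0`; in particular the penalized
reward is almost surely at most `V₀⋆(x)`. -/
theorem pathwise_supermartingale_inequality
    {S A : Type*} [MeasurableSpace S] [Nonempty A]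
    {Ω : Type*} [mΩ : MeasurableSpace Ω]
    (μ : Measure Ω) [IsProbabilityMeasure μ]
    (H : ℕ) (x : S)
    -- transition kernels
    (P : ℕ → S → A → Measure S) (hP : ∀ t y a, IsProbabilityMeasure (P t y a))
    -- bounded rewards and terminal reward
    (R : ℕ → S → A → ℝ) (F : S → ℝ) (Rmax : ℝ) (hRmax : 0 ≤ Rmax)
    (hRb : ∀ t y a, |R t y a| ≤ Rmax) (hFb : ∀ y, |F y| ≤ Rmax)
    -- the optimal value functions, given by the Bellman recursion, and bounded
    (Vstar : ℕ → S → ℝ)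
    (hVstarH : ∀ y, Vstar H y = F y)
    (hBell : ∀ h, h < H → ∀ y,
      Vstar h y = ⨆ a : A, (R h y a + ∫ z, Vstar (h + 1) z ∂(P (h + 1) y a)))
    (hVb : ∀ h y, |Vstar h y| ≤ ((H : ℝ) + 1) * Rmax)
    -- the controlled chain for deterministic action vectors
    (Schain : ℕ → (ℕ → A) → Ω → S)
    (hS0 : ∀ a ω, Schain 0 a ω = x)
    -- the optimal penalties ξ⋆
    (ξstar : ℕ → (ℕ → A) → Ω → ℝ)
    (hξstar : ∀ t (a : ℕ → A) ω, ξstar (t + 1) a ω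
      = Vstar (t + 1) (Schain (t + 1) a ω)
        - ∫ z, Vstar (t + 1) z ∂(P (t + 1) (Schain t a ω) (a t))) :
    ∀ a : ℕ → A, ∀ᵐ ω ∂μ,
      ((∑ t ∈ Finset.range H, (R t (Schain t a ω) (a t) - ξstar (t + 1) a ω)
          + F (Schain H a ω))
        = Vstar 0 x
          + (F (Schain H a ω) - Vstar H (Schain H a ω)
            + ∑ t ∈ Finset.range H,
              (R t (Schain t a ω) (a t)
                + (∫ z, Vstar (t + 1) z ∂(P (t + 1) (Schain t a ω) (a t)))
                - Vstar t (Schain t a ω)))) ∧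
      (F (Schain H a ω) - Vstar H (Schain H a ω)
        + ∑ t ∈ Finset.range H,
          (R t (Schain t a ω) (a t)
            + (∫ z, Vstar (t + 1) z ∂(P (t + 1) (Schain t a ω) (a t)))
            - Vstar t (Schain t a ω))) ≤ 0 ∧
      (∑ t ∈ Finset.range H, (R t (Schain t a ω) (a t) - ξstar (t + 1) a ω)
          + F (Schain H a ω)) ≤ Vstar 0 x := by
  -- Bellman one-step inequality
  have hstep : ∀ t, t < H → ∀ y (b : A),
      R t y b + ∫ z, Vstar (t + 1) z ∂(P (t + 1) y b) ≤ Vstar t y := by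
    intro t ht y b
    rw [hBell t ht y]
    have hbdd : BddAbove (Set.range fun a : A =>
        R t y a + ∫ z, Vstar (t + 1) z ∂(P (t + 1) y a)) := by
      refine ⟨Rmax + ((H : ℝ) + 1) * Rmax, ?_⟩
      rintro - ⟨c, rfl⟩
      have hI : |∫ z, Vstar (t + 1) z ∂(P (t + 1) y c)| ≤ ((H : ℝ) + 1) * Rmax := by
        have := hP (t + 1) y c
        calc |∫ z, Vstar (t + 1) z ∂(P (t + 1) y c)|
            ≤ ((H : ℝ) + 1) * Rmax * ((P (t + 1) y c) Set.univ).toReal := by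
              have : ∀ z, ‖Vstar (t + 1) z‖ ≤ ((H : ℝ) + 1) * Rmax := fun z => by
                rw [Real.norm_eq_abs]; exact hVb (t + 1) z
              simpa [Real.norm_eq_abs] using norm_integral_le_of_norm_le_const
                (μ := P (t + 1) y c) (Filter.Eventually.of_forall this)
          _ = ((H : ℝ) + 1) * Rmax := by simp
      have := hRb t y c
      have h1 := abs_le.1 this
      have h2 := abs_le.1 hI
      dsimp only
      linarith
    exact le_ciSup hbdd b
  intro a
  refine Filter.Eventually.of_forall fun ω => ?_
  set f : ℕ → ℝ := fun t => Vstar t (Schain t a ω) with hf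
  have tel : ∑ t ∈ Finset.range H, (f t - f (t + 1)) = f 0 - f H :=
    Finset.sum_range_sub' f H
  have hf0 : f 0 = Vstar 0 x := by rw [hf]; simp [hS0]
  have hsplit : ∑ t ∈ Finset.range H,
      (R t (Schain t a ω) (a t) - ξstar (t + 1) a ω)
      = (∑ t ∈ Finset.range H,
          (R t (Schain t a ω) (a t)
            + (∫ z, Vstar (t + 1) z ∂(P (t + 1) (Schain t a ω) (a t)))
            - Vstar t (Schain t a ω)))
        + (f 0 - f H) := by
    rw [← tel, ← Finset.sum_add_distrib]
    refine Finset.sum_congr rfl fun t _ => ?_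
    rw [hξstar t a ω]
    simp only [hf]
    ring
  have hFH : F (Schain H a ω) - Vstar H (Schain H a ω) = 0 := by
    rw [hVstarH]; ring
  have hDle : F (Schain H a ω) - Vstar H (Schain H a ω)
      + ∑ t ∈ Finset.range H,
        (R t (Schain t a ω) (a t)
          + (∫ z, Vstar (t + 1) z ∂(P (t + 1) (Schain t a ω) (a t)))
          - Vstar t (Schain t a ω)) ≤ 0 := by
    rw [hFH, zero_add]
    refine Finset.sum_nonpos fun t ht => ?_
    have := hstep t (Finset.mem_range.1 ht) (Schain t a ω) (a t)
    linarith
  have heq : (∑ t ∈ Finset.range H,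
        (R t (Schain t a ω) (a t) - ξstar (t + 1) a ω) + F (Schain H a ω))
      = Vstar 0 x
        + (F (Schain H a ω) - Vstar H (Schain H a ω)
          + ∑ t ∈ Finset.range H,
            (R t (Schain t a ω) (a t)
              + (∫ z, Vstar (t + 1) z ∂(P (t + 1) (Schain t a ω) (a t)))
              - Vstar t (Schain t a ω))) := by
    rw [hsplit, hf0]
    have : f H = Vstar H (Schain H a ω) := rfl
    rw [this]; ring
  exact ⟨heq, hDle, by linarith⟩
end

section
/- Gaussian Radon–Nikodym bound: For d = 1, α > 0, and the Gaussian reference densities μ_h(x) = √(α/(π(h+1))) exp(−α x²/(h+1)) for h = 0,1,2,…, one has for all integers 0 ≤ h < l: ∫∫ (μ_h(x)/μ_l(x+u)) e^{−2α u²} dx du ≤ (l+1)π / ( α √(2(l−h) − 1) ). Consequently, if all composed transition densities satisfy sup_{0≤h<l<H,π} p_{h+1}^{π_h}⋯p_l^{π_{l−1}}(y|x) ≤ C e^{−α|y−x|²}, then 𝕽^max ≤ C √( max_{0≤h<l<H} (l+1)π/(α√(2(l−h)−1)) ) ≤ C √(Hπ/α). -/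
open MeasureTheory Real

lemma gauss1 (c b t : ℝ) : (∫ x : ℝ, c * Real.exp (-b * (x + t)^2)) = c * Real.sqrt (π/b) := by
  rw [MeasureTheory.integral_const_mul,
    MeasureTheory.integral_add_right_eq_self (fun x => Real.exp (-b * x^2)) t,
    integral_gaussian]

lemma gauss2 (K β γ m : ℝ) :
    (∫ u : ℝ, ∫ x : ℝ, K * Real.exp (-γ * u^2) * Real.exp (-β * (x + m*u)^2))
      = K * Real.sqrt (π/β) * Real.sqrt (π/γ) := by
  have h1 : ∀ u : ℝ, (∫ x : ℝ, K * Real.exp (-γ * u^2) * Real.exp (-β * (x + m*u)^2))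
      = (K * Real.sqrt (π/β)) * Real.exp (-γ * u^2) := by
    intro u
    rw [gauss1]; ring
  simp_rw [h1, MeasureTheory.integral_const_mul, integral_gaussian]

lemma key1 (α : ℝ) (hα : 0 < α) (h l : ℕ) (hl : h < l) (u x : ℝ) :
    (Real.sqrt (α/(Real.pi*((h:ℝ)+1))) * Real.exp (-(α*x^2)/((h:ℝ)+1))) /
      (Real.sqrt (α/(Real.pi*((l:ℝ)+1))) * Real.exp (-(α*(x+u)^2)/((l:ℝ)+1)))
      * Real.exp (-(2*α*u^2))
    = Real.sqrt (((l:ℝ)+1)/((h:ℝ)+1))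
        * Real.exp (-(α*(2*((l:ℝ)-(h:ℝ))-1)/((l:ℝ)-(h:ℝ))) * u^2)
        * Real.exp (-(α*((l:ℝ)-(h:ℝ))/(((h:ℝ)+1)*((l:ℝ)+1)))
            * (x + (-(((h:ℝ)+1)/((l:ℝ)-(h:ℝ))))*u)^2) := by
  have hπ := Real.pi_pos
  have hHh : (0:ℝ) < (h:ℝ)+1 := by positivity
  have hL : (0:ℝ) < (l:ℝ)+1 := by positivity
  have hcast : (h:ℝ) < (l:ℝ) := by exact_mod_cast hl
  have hlh : (0:ℝ) < (l:ℝ)-(h:ℝ) := by linarith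
  have hAB : Real.sqrt (α/(Real.pi*((h:ℝ)+1))) / Real.sqrt (α/(Real.pi*((l:ℝ)+1)))
      = Real.sqrt (((l:ℝ)+1)/((h:ℝ)+1)) := by
    rw [← Real.sqrt_div (by positivity)]
    congr 1
    field_simp
  have hexp : Real.exp (-(α*x^2)/((h:ℝ)+1)) / Real.exp (-(α*(x+u)^2)/((l:ℝ)+1))
      * Real.exp (-(2*α*u^2))
      = Real.exp (-(α*(2*((l:ℝ)-(h:ℝ))-1)/((l:ℝ)-(h:ℝ))) * u^2)
        * Real.exp (-(α*((l:ℝ)-(h:ℝ))/(((h:ℝ)+1)*((l:ℝ)+1)))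
            * (x + (-(((h:ℝ)+1)/((l:ℝ)-(h:ℝ))))*u)^2) := by
    rw [← Real.exp_sub, ← Real.exp_add, ← Real.exp_add]
    congr 1
    field_simp
    ring
  calc (Real.sqrt (α/(Real.pi*((h:ℝ)+1))) * Real.exp (-(α*x^2)/((h:ℝ)+1))) /
      (Real.sqrt (α/(Real.pi*((l:ℝ)+1))) * Real.exp (-(α*(x+u)^2)/((l:ℝ)+1)))
      * Real.exp (-(2*α*u^2))
      = (Real.sqrt (α/(Real.pi*((h:ℝ)+1))) / Real.sqrt (α/(Real.pi*((l:ℝ)+1))))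
        * (Real.exp (-(α*x^2)/((h:ℝ)+1)) / Real.exp (-(α*(x+u)^2)/((l:ℝ)+1))
          * Real.exp (-(2*α*u^2))) := by ring
    _ = _ := by rw [hAB, hexp]; ring

lemma key2 (α C : ℝ) (hα : 0 < α) (h l : ℕ) (hl : h < l) (x y : ℝ) :
    (Real.sqrt (α/(Real.pi*((h:ℝ)+1))) * Real.exp (-(α*x^2)/((h:ℝ)+1))) /
      (Real.sqrt (α/(Real.pi*((l:ℝ)+1))) * Real.exp (-(α*y^2)/((l:ℝ)+1)))
      * (C * Real.exp (-(α*(y-x)^2)))^2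
    = (C^2 * Real.sqrt (((l:ℝ)+1)/((h:ℝ)+1))
        * Real.exp (-(α*(2*((l:ℝ)-(h:ℝ))-1)/(((h:ℝ)+1)*(2*(l:ℝ)+1))) * x^2))
        * Real.exp (-(α*(2*(l:ℝ)+1)/((l:ℝ)+1))
            * (y + (-(2*((l:ℝ)+1)/(2*(l:ℝ)+1)))*x)^2) := by
  have hπ := Real.pi_pos
  have hHh : (0:ℝ) < (h:ℝ)+1 := by positivity
  have hL : (0:ℝ) < (l:ℝ)+1 := by positivity
  have hT : (0:ℝ) < 2*(l:ℝ)+1 := by positivity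
  have hcast : (h:ℝ) < (l:ℝ) := by exact_mod_cast hl
  have hAB : Real.sqrt (α/(Real.pi*((h:ℝ)+1))) / Real.sqrt (α/(Real.pi*((l:ℝ)+1)))
      = Real.sqrt (((l:ℝ)+1)/((h:ℝ)+1)) := by
    rw [← Real.sqrt_div (by positivity)]
    congr 1
    field_simp
  have hexp : Real.exp (-(α*x^2)/((h:ℝ)+1)) / Real.exp (-(α*y^2)/((l:ℝ)+1))
      * (Real.exp (-(α*(y-x)^2)))^2
      = Real.exp (-(α*(2*((l:ℝ)-(h:ℝ))-1)/(((h:ℝ)+1)*(2*(l:ℝ)+1))) * x^2)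
        * Real.exp (-(α*(2*(l:ℝ)+1)/((l:ℝ)+1))
            * (y + (-(2*((l:ℝ)+1)/(2*(l:ℝ)+1)))*x)^2) := by
    rw [← Real.exp_sub, pow_two (Real.exp (-(α*(y-x)^2))), ← Real.exp_add, ← Real.exp_add,
      ← Real.exp_add]
    congr 1
    field_simp
    ring
  calc (Real.sqrt (α/(Real.pi*((h:ℝ)+1))) * Real.exp (-(α*x^2)/((h:ℝ)+1))) /
      (Real.sqrt (α/(Real.pi*((l:ℝ)+1))) * Real.exp (-(α*y^2)/((l:ℝ)+1)))
      * (C * Real.exp (-(α*(y-x)^2)))^2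
      = C^2 * ((Real.sqrt (α/(Real.pi*((h:ℝ)+1))) / Real.sqrt (α/(Real.pi*((l:ℝ)+1))))
        * (Real.exp (-(α*x^2)/((h:ℝ)+1)) / Real.exp (-(α*y^2)/((l:ℝ)+1))
          * (Real.exp (-(α*(y-x)^2)))^2)) := by ring
    _ = _ := by rw [hAB, hexp]; ring

/-- **Gaussian Radon–Nikodym bound.**
For the Gaussian reference densities
`μ_h(x) = √(α/(π(h+1))) exp(−α x²/(h+1))` on `ℝ` one has, for `0 ≤ h < l`,
`∫∫ (μ_h(x)/μ_l(x+u)) e^{−2αu²} dx du ≤ (l+1)π/(α √(2(l−h)−1))`.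
Consequently, if all composed transition densities are dominated by
`C e^{−α|y−x|²}`, then the Radon–Nikodym quantity is bounded by
`C √(max_{0≤h<l<H} (l+1)π/(α√(2(l−h)−1))) ≤ C √(Hπ/α)`. -/
theorem gaussian_radon_nikodym_bound
    (α : ℝ) (hα : 0 < α)
    (μdens : ℕ → ℝ → ℝ)
    (hμ : ∀ (h : ℕ) (x : ℝ), μdens h x
      = Real.sqrt (α / (Real.pi * ((h : ℝ) + 1)))
        * Real.exp (-(α * x ^ 2) / ((h : ℝ) + 1))) :
    (∀ h l : ℕ, h < l →
      (∫ u : ℝ, ∫ x : ℝ, μdens h x / μdens l (x + u) * Real.exp (-(2 * α * u ^ 2)))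
        ≤ ((l : ℝ) + 1) * Real.pi
            / (α * Real.sqrt (2 * ((l : ℝ) - (h : ℝ)) - 1))) ∧
    (∀ (H : ℕ) (C : ℝ), 0 ≤ C →
      ∀ p : ℕ → ℕ → ℝ → ℝ → ℝ,
        (∀ h l x y, 0 ≤ p h l x y) →
        (∀ h l x y, p h l x y ≤ C * Real.exp (-(α * (y - x) ^ 2))) →
        ∀ h l : ℕ, h < l → l < H →
          Real.sqrt (∫ x : ℝ, ∫ y : ℝ, μdens h x / μdens l y * (p h l x y) ^ 2)
            ≤ C * Real.sqrt ((H : ℝ) * Real.pi / α)) := by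
  have hπ := Real.pi_pos
  constructor
  · -- Part 1
    intro h l hl
    have hHh : (0:ℝ) < (h:ℝ)+1 := by positivity
    have hL : (0:ℝ) < (l:ℝ)+1 := by positivity
    have hcast : (h:ℝ) < (l:ℝ) := by exact_mod_cast hl
    have hlh1 : (1:ℝ) ≤ (l:ℝ)-(h:ℝ) := by
      have : ((h:ℝ)+1) ≤ (l:ℝ) := by exact_mod_cast Nat.succ_le_of_lt hl
      linarith
    have hlh : (0:ℝ) < (l:ℝ)-(h:ℝ) := by linarith
    have hD : (0:ℝ) < 2*((l:ℝ)-(h:ℝ))-1 := by linarith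
    have hkey : ∀ u x : ℝ, μdens h x / μdens l (x + u) * Real.exp (-(2 * α * u ^ 2))
        = Real.sqrt (((l:ℝ)+1)/((h:ℝ)+1))
          * Real.exp (-(α*(2*((l:ℝ)-(h:ℝ))-1)/((l:ℝ)-(h:ℝ))) * u^2)
          * Real.exp (-(α*((l:ℝ)-(h:ℝ))/(((h:ℝ)+1)*((l:ℝ)+1)))
              * (x + (-(((h:ℝ)+1)/((l:ℝ)-(h:ℝ))))*u)^2) := by
      intro u x
      rw [hμ, hμ]
      exact key1 α hα h l hl u x
    simp_rw [hkey]
    rw [gauss2]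
    apply le_of_eq
    have hβ : (0:ℝ) < α*((l:ℝ)-(h:ℝ))/(((h:ℝ)+1)*((l:ℝ)+1)) := by positivity
    have hγ : (0:ℝ) < α*(2*((l:ℝ)-(h:ℝ))-1)/((l:ℝ)-(h:ℝ)) := by positivity
    have hsD : Real.sqrt (2*((l:ℝ)-(h:ℝ))-1) ^ 2 = 2*((l:ℝ)-(h:ℝ))-1 := Real.sq_sqrt hD.le
    have hsD0 : Real.sqrt (2*((l:ℝ)-(h:ℝ))-1) ≠ 0 := ne_of_gt (Real.sqrt_pos.mpr hD)
    have halg : ((l:ℝ)+1)/((h:ℝ)+1)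
          * (π/(α*((l:ℝ)-(h:ℝ))/(((h:ℝ)+1)*((l:ℝ)+1))))
          * (π/(α*(2*((l:ℝ)-(h:ℝ))-1)/((l:ℝ)-(h:ℝ))))
        = (((l:ℝ)+1) * π / (α * Real.sqrt (2*((l:ℝ)-(h:ℝ))-1)))^2 := by
      rw [div_pow, mul_pow, mul_pow, hsD]
      field_simp
    rw [← Real.sqrt_mul (by positivity), ← Real.sqrt_mul (by positivity), halg,
      Real.sqrt_sq (by positivity)]
  · -- Part 2
    intro H C hC p hp0 hpb h l hl hlH
    have hHh : (0:ℝ) < (h:ℝ)+1 := by positivity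
    have hL : (0:ℝ) < (l:ℝ)+1 := by positivity
    have hT : (0:ℝ) < 2*(l:ℝ)+1 := by positivity
    have hcast : (h:ℝ) < (l:ℝ) := by exact_mod_cast hl
    have hlh1 : (1:ℝ) ≤ (l:ℝ)-(h:ℝ) := by
      have : ((h:ℝ)+1) ≤ (l:ℝ) := by exact_mod_cast Nat.succ_le_of_lt hl
      linarith
    have hD : (0:ℝ) < 2*((l:ℝ)-(h:ℝ))-1 := by linarith
    have hHH : ((l:ℝ)+1) ≤ (H:ℝ) := by exact_mod_cast Nat.succ_le_of_lt hlH
    have hβ₂ : (0:ℝ) < α*(2*(l:ℝ)+1)/((l:ℝ)+1) := by positivity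
    have hγ₂ : (0:ℝ) < α*(2*((l:ℝ)-(h:ℝ))-1)/(((h:ℝ)+1)*(2*(l:ℝ)+1)) := by positivity
    have hμpos : ∀ (k : ℕ) (x : ℝ), 0 < μdens k x := by
      intro k x
      rw [hμ]
      have : (0:ℝ) < (k:ℝ)+1 := by positivity
      positivity
    have hfnn : ∀ x y : ℝ, 0 ≤ μdens h x / μdens l y * (p h l x y) ^ 2 := by
      intro x y
      have := hμpos h x
      have := hμpos l y
      positivity
    have hgy : ∀ x y : ℝ, μdens h x / μdens l y * (C * Real.exp (-(α*(y-x)^2)))^2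
        = (C^2 * Real.sqrt (((l:ℝ)+1)/((h:ℝ)+1))
            * Real.exp (-(α*(2*((l:ℝ)-(h:ℝ))-1)/(((h:ℝ)+1)*(2*(l:ℝ)+1))) * x^2))
          * Real.exp (-(α*(2*(l:ℝ)+1)/((l:ℝ)+1))
              * (y + (-(2*((l:ℝ)+1)/(2*(l:ℝ)+1)))*x)^2) := by
      intro x y
      rw [hμ, hμ]
      exact key2 α C hα h l hl x y
    have hfle : ∀ x y : ℝ, μdens h x / μdens l y * (p h l x y) ^ 2
        ≤ μdens h x / μdens l y * (C * Real.exp (-(α*(y-x)^2)))^2 := by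
      intro x y
      apply mul_le_mul_of_nonneg_left _ (le_of_lt (div_pos (hμpos h x) (hμpos l y)))
      exact pow_le_pow_left₀ (hp0 h l x y) (hpb h l x y) 2
    have hgint : ∀ x : ℝ, Integrable (fun y : ℝ =>
        (C^2 * Real.sqrt (((l:ℝ)+1)/((h:ℝ)+1))
            * Real.exp (-(α*(2*((l:ℝ)-(h:ℝ))-1)/(((h:ℝ)+1)*(2*(l:ℝ)+1))) * x^2))
          * Real.exp (-(α*(2*(l:ℝ)+1)/((l:ℝ)+1))
              * (y + (-(2*((l:ℝ)+1)/(2*(l:ℝ)+1)))*x)^2)) := by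
      intro x
      exact ((integrable_exp_neg_mul_sq hβ₂).comp_add_right
        ((-(2*((l:ℝ)+1)/(2*(l:ℝ)+1)))*x)).const_mul _
    have hinner : ∀ x : ℝ, (∫ y : ℝ, μdens h x / μdens l y * (p h l x y) ^ 2)
        ≤ (C^2 * Real.sqrt (((l:ℝ)+1)/((h:ℝ)+1)) * Real.sqrt (π/(α*(2*(l:ℝ)+1)/((l:ℝ)+1))))
          * Real.exp (-(α*(2*((l:ℝ)-(h:ℝ))-1)/(((h:ℝ)+1)*(2*(l:ℝ)+1))) * x^2) := by
      intro x
      have step : (∫ y : ℝ, μdens h x / μdens l y * (p h l x y) ^ 2)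
          ≤ ∫ y : ℝ, (C^2 * Real.sqrt (((l:ℝ)+1)/((h:ℝ)+1))
              * Real.exp (-(α*(2*((l:ℝ)-(h:ℝ))-1)/(((h:ℝ)+1)*(2*(l:ℝ)+1))) * x^2))
            * Real.exp (-(α*(2*(l:ℝ)+1)/((l:ℝ)+1))
                * (y + (-(2*((l:ℝ)+1)/(2*(l:ℝ)+1)))*x)^2) := by
        apply integral_mono_of_nonneg (ae_of_all _ fun y => hfnn x y) (hgint x)
        apply ae_of_all
        intro y
        have hfg := hfle x y
        rw [hgy x y] at hfg
        exact hfg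
      calc (∫ y : ℝ, μdens h x / μdens l y * (p h l x y) ^ 2) ≤ _ := step
        _ = _ := by rw [gauss1]; ring
    have houter : (∫ x : ℝ, ∫ y : ℝ, μdens h x / μdens l y * (p h l x y) ^ 2)
        ≤ C^2 * (Real.sqrt (((l:ℝ)+1)/((h:ℝ)+1))
            * Real.sqrt (π/(α*(2*(l:ℝ)+1)/((l:ℝ)+1)))
            * Real.sqrt (π/(α*(2*((l:ℝ)-(h:ℝ))-1)/(((h:ℝ)+1)*(2*(l:ℝ)+1))))) := by
      have step : (∫ x : ℝ, ∫ y : ℝ, μdens h x / μdens l y * (p h l x y) ^ 2)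
          ≤ ∫ x : ℝ, (C^2 * Real.sqrt (((l:ℝ)+1)/((h:ℝ)+1))
              * Real.sqrt (π/(α*(2*(l:ℝ)+1)/((l:ℝ)+1))))
            * Real.exp (-(α*(2*((l:ℝ)-(h:ℝ))-1)/(((h:ℝ)+1)*(2*(l:ℝ)+1))) * x^2) := by
        apply integral_mono_of_nonneg
        · exact ae_of_all _ fun x => integral_nonneg fun y => hfnn x y
        · exact (integrable_exp_neg_mul_sq hγ₂).const_mul _
        · exact ae_of_all _ fun x => hinner x
      calc (∫ x : ℝ, ∫ y : ℝ, μdens h x / μdens l y * (p h l x y) ^ 2) ≤ _ := step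
        _ = _ := by rw [MeasureTheory.integral_const_mul, integral_gaussian]; ring
    have hbound : Real.sqrt (((l:ℝ)+1)/((h:ℝ)+1))
            * Real.sqrt (π/(α*(2*(l:ℝ)+1)/((l:ℝ)+1)))
            * Real.sqrt (π/(α*(2*((l:ℝ)-(h:ℝ))-1)/(((h:ℝ)+1)*(2*(l:ℝ)+1))))
        ≤ (H:ℝ) * π / α := by
      rw [← Real.sqrt_mul (by positivity), ← Real.sqrt_mul (by positivity)]
      have harg : ((l:ℝ)+1)/((h:ℝ)+1) * (π/(α*(2*(l:ℝ)+1)/((l:ℝ)+1)))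
            * (π/(α*(2*((l:ℝ)-(h:ℝ))-1)/(((h:ℝ)+1)*(2*(l:ℝ)+1))))
          = ((l:ℝ)+1)^2 * π^2 / (α^2 * (2*((l:ℝ)-(h:ℝ))-1)) := by
        field_simp
      have hle : ((l:ℝ)+1)^2 * π^2 / (α^2 * (2*((l:ℝ)-(h:ℝ))-1)) ≤ ((H:ℝ) * π / α)^2 := by
        rw [div_pow, mul_pow]
        apply div_le_div₀ (by positivity) _ (by positivity) _
        · have : ((l:ℝ)+1)^2 ≤ (H:ℝ)^2 := by nlinarith
          nlinarith [sq_nonneg π]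
        · nlinarith [sq_nonneg α, hα]
      calc Real.sqrt (((l:ℝ)+1)/((h:ℝ)+1) * (π/(α*(2*(l:ℝ)+1)/((l:ℝ)+1)))
            * (π/(α*(2*((l:ℝ)-(h:ℝ))-1)/(((h:ℝ)+1)*(2*(l:ℝ)+1)))))
          ≤ Real.sqrt (((H:ℝ) * π / α)^2) := by
            apply Real.sqrt_le_sqrt
            rw [harg]
            exact hle
        _ = (H:ℝ) * π / α := Real.sqrt_sq (by positivity)
    have hfinal : (∫ x : ℝ, ∫ y : ℝ, μdens h x / μdens l y * (p h l x y) ^ 2)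
        ≤ C^2 * ((H:ℝ) * π / α) := by
      calc (∫ x : ℝ, ∫ y : ℝ, μdens h x / μdens l y * (p h l x y) ^ 2) ≤ _ := houter
        _ ≤ C^2 * ((H:ℝ) * π / α) := by
          apply mul_le_mul_of_nonneg_left hbound (sq_nonneg C)
    calc Real.sqrt (∫ x : ℝ, ∫ y : ℝ, μdens h x / μdens l y * (p h l x y) ^ 2)
        ≤ Real.sqrt (C^2 * ((H:ℝ) * π / α)) := Real.sqrt_le_sqrt hfinal
      _ = C * Real.sqrt ((H:ℝ) * π / α) := by
          rw [Real.sqrt_mul (sq_nonneg C), Real.sqrt_sq hC]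
end

section
/- Variance and standard-deviation bound for the approximate pathwise dual: With η* the optimal martingale functions and η̃ any approximations, the pathwise dual objective Z̃ := sup_{a∈A^H} ( Σ_{t=0}^{H−1} ( R_t(S_t(a_{<t}),a_t) − η̃_{t+1}(S_t(a_{<t}),a_t) ) + F(S_H(a_{<H})) ) satisfies Var[Z̃] ≤ E[ ( Σ_{t=0}^{H−1} sup_{(x',a')∈S×A} |η_{t+1}^*(x',a') − η̃_{t+1}(x',a')| )² ] and hence Dev[Z̃] ≤ Σ_{t=0}^{H−1} E[ sup_{(x',a')∈S×A} |η_{t+1}^*(x',a') − η̃_{t+1}(x',a')|² ]^{1/2}, where Dev denotes the standard deviation. -/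
/-! With the optimal martingale `η⋆`, the pathwise dual objective equals `V₀⋆(x)` on every
noise path: it telescopes to `V₀⋆(x)` plus the Bellman gaps `Q_t − V_t ≤ 0` along the
trajectory, and a greedy ε-optimal feedback policy makes all gaps small. Replacing `η⋆` by `η̃`
moves every objective, hence also their supremum, by at most `∑_t sup |η⋆_{t+1} − η̃_{t+1}|`.
So `|Z̃ − V₀⋆(x)|` is bounded pathwise by that sum; the variance bound follows from
`Var Z̃ ≤ E[(Z̃ − c)²]` for the constant `c = V₀⋆(x)`, and the deviation bound from Minkowski's
inequality in `L²`. -/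

open MeasureTheory ProbabilityTheory

/-- The controlled trajectory in the iterative-function representation:
`S_0 = x`, `S_{t+1}(a_{<t+1}) = 𝒦_{t+1}(S_t(a_{<t}), a_t, ε_{t+1})`. -/
def traj {𝒮 𝒜 E : Type*} (𝒦 : ℕ → 𝒮 → 𝒜 → E → 𝒮) (x : 𝒮)
    (a : ℕ → 𝒜) (es : ℕ → E) : ℕ → 𝒮
  | 0 => x
  | t + 1 => 𝒦 (t + 1) (traj 𝒦 x a es t) (a t) (es (t + 1))

open Set

theorem abs_ciSup_le {ι : Type*} [Nonempty ι] {f : ι → ℝ} {B : ℝ} (h : ∀ i, |f i| ≤ B) :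
    |⨆ i, f i| ≤ B := by
  have hbdd : BddAbove (range f) := ⟨B, forall_mem_range.2 fun i => (abs_le.1 (h i)).2⟩
  exact abs_le.2 ⟨(abs_le.1 (h (Classical.arbitrary ι))).1.trans (le_ciSup hbdd _),
    ciSup_le fun i => (abs_le.1 (h i)).2⟩

theorem abs_ciSup_sub_le_of_isLUB {ι : Type*} [Nonempty ι] {f g : ι → ℝ} {b c : ℝ}
    (hg : IsLUB (range g) b) (h : ∀ i, |f i - g i| ≤ c) : |(⨆ i, f i) - b| ≤ c := by
  have hfg : ∀ i, f i ≤ g i + c := fun i => by linarith [(abs_le.1 (h i)).2]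
  have hgf : ∀ i, g i ≤ f i + c := fun i => by linarith [(abs_le.1 (h i)).1]
  have hf_le : ∀ i, f i ≤ b + c := fun i => (hfg i).trans (by gcongr; exact hg.1 ⟨i, rfl⟩)
  have hb_le : b ≤ (⨆ i, f i) + c := by
    refine hg.2 (forall_mem_range.2 fun i => (hgf i).trans ?_)
    gcongr
    exact le_ciSup ⟨b + c, forall_mem_range.2 hf_le⟩ i
  rw [abs_le]
  constructor
  · linarith
  · linarith [ciSup_le hf_le]

section L2

variable {α : Type*} [MeasurableSpace α] {μ : Measure α}

theorem sqrt_integral_sq_eq_lpNorm {f : α → ℝ} (hf : AEStronglyMeasurable f μ) :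
    √(∫ x, f x ^ 2 ∂μ) = lpNorm f 2 μ := by
  rw [lpNorm_eq_integral_norm_rpow_toReal two_ne_zero ENNReal.ofNat_ne_top hf]
  simp [Real.sqrt_eq_rpow, Real.norm_eq_abs]

theorem sqrt_integral_sum_sq_le {ι : Type*} {s : Finset ι} {f : ι → α → ℝ}
    (hf : ∀ i ∈ s, MemLp (f i) 2 μ) :
    √(∫ x, (∑ i ∈ s, f i x) ^ 2 ∂μ) ≤ ∑ i ∈ s, √(∫ x, f i x ^ 2 ∂μ) := by
  have hsum : AEStronglyMeasurable (∑ i ∈ s, f i) μ :=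
    Finset.aestronglyMeasurable_sum _ fun i hi => (hf i hi).aestronglyMeasurable
  simp only [← Finset.sum_apply _ s f]
  rw [sqrt_integral_sq_eq_lpNorm hsum,
    Finset.sum_congr rfl fun i hi => sqrt_integral_sq_eq_lpNorm (hf i hi).aestronglyMeasurable]
  exact lpNorm_sum_le hf one_le_two

end L2

theorem variance_le_integral_sq_of_abs_sub_le {Ω : Type*} [MeasurableSpace Ω] {μ : Measure Ω}
    [IsProbabilityMeasure μ] {X Y : Ω → ℝ} {c : ℝ} (hX : AEStronglyMeasurable X μ)
    (hY : Integrable (fun ω => Y ω ^ 2) μ) (h : ∀ᵐ ω ∂μ, |X ω - c| ≤ Y ω) :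
    variance X μ ≤ ∫ ω, Y ω ^ 2 ∂μ := by
  rw [← variance_sub_const hX c]
  refine (variance_le_expectation_sq (hX.sub aestronglyMeasurable_const)).trans
    (integral_mono_of_nonneg (ae_of_all _ fun _ => sq_nonneg _) hY ?_)
  filter_upwards [h] with ω hω
  simpa only [Pi.pow_apply, Pi.sub_apply, sq_abs] using pow_le_pow_left₀ (abs_nonneg _) hω 2

theorem abs_integral_le_of_abs_le {α : Type*} [MeasurableSpace α] {μ : Measure α}
    [IsProbabilityMeasure μ] {f : α → ℝ} {C : ℝ} (h : ∀ x, |f x| ≤ C) :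
    |∫ x, f x ∂μ| ≤ C := by
  simpa using norm_integral_le_of_norm_le_const (μ := μ) (f := f) (C := C)
    (.of_forall (by simpa using h))

section DynamicProgramming

variable {𝒮 𝒜 E : Type*} {𝒦 : ℕ → 𝒮 → 𝒜 → E → 𝒮} {R : ℕ → 𝒮 → 𝒜 → ℝ} {F : 𝒮 → ℝ}
  {H : ℕ} {x : 𝒮}

def pathwiseDual (𝒦 : ℕ → 𝒮 → 𝒜 → E → 𝒮) (x : 𝒮) (R : ℕ → 𝒮 → 𝒜 → ℝ) (F : 𝒮 → ℝ)
    (H : ℕ) (η : ℕ → 𝒮 → 𝒜 → E → ℝ) (es : ℕ → E) (a : ℕ → 𝒜) : ℝ :=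
  ∑ t ∈ Finset.range H,
      (R t (traj 𝒦 x a es t) (a t) - η (t + 1) (traj 𝒦 x a es t) (a t) (es (t + 1)))
    + F (traj 𝒦 x a es H)

theorem abs_pathwiseDual_sub_le {η η' : ℕ → 𝒮 → 𝒜 → E → ℝ} {es : ℕ → E} {d : ℕ → ℝ}
    (hd : ∀ t < H, ∀ y a, |η (t + 1) y a (es (t + 1)) - η' (t + 1) y a (es (t + 1))| ≤ d t)
    (a : ℕ → 𝒜) :
    |pathwiseDual 𝒦 x R F H η es a - pathwiseDual 𝒦 x R F H η' es a|
      ≤ ∑ t ∈ Finset.range H, d t := by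
  simp only [pathwiseDual, add_sub_add_right_eq_sub, ← Finset.sum_sub_distrib,
    sub_sub_sub_cancel_left]
  refine (Finset.abs_sum_le_sum_abs _ _).trans (Finset.sum_le_sum fun t ht => ?_)
  rw [abs_sub_comm]
  exact hd t (Finset.mem_range.1 ht) _ _

theorem exists_openLoop_eq_feedback (𝒦 : ℕ → 𝒮 → 𝒜 → E → 𝒮) (x : 𝒮) (es : ℕ → E)
    (π : ℕ → 𝒮 → 𝒜) : ∃ a : ℕ → 𝒜, ∀ t, a t = π t (traj 𝒦 x a es t) := by
  let s : ℕ → 𝒮 := fun n => Nat.rec x (fun t y => 𝒦 (t + 1) y (π t y) (es (t + 1))) n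
  have hs : ∀ t, traj 𝒦 x (fun t => π t (s t)) es t = s t := by
    intro t
    induction t with
    | zero => rfl
    | succ t ih => simp only [traj, ih]; rfl
  exact ⟨fun t => π t (s t), fun t => by rw [hs]⟩

variable [MeasurableSpace E] {ν : Measure E} {V : ℕ → 𝒮 → ℝ}

noncomputable def optimalMartingale (𝒦 : ℕ → 𝒮 → 𝒜 → E → 𝒮) (ν : Measure E)
    (V : ℕ → 𝒮 → ℝ) (t : ℕ) (y : 𝒮) (a : 𝒜) (e : E) : ℝ :=
  V t (𝒦 t y a e) - ∫ e', V t (𝒦 t y a e') ∂ν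

noncomputable def qValue (R : ℕ → 𝒮 → 𝒜 → ℝ) (𝒦 : ℕ → 𝒮 → 𝒜 → E → 𝒮) (ν : Measure E)
    (V : ℕ → 𝒮 → ℝ) (t : ℕ) (y : 𝒮) (a : 𝒜) : ℝ :=
  R t y a + ∫ e, V (t + 1) (𝒦 (t + 1) y a e) ∂ν

theorem abs_optimalMartingale_le [IsProbabilityMeasure ν] {t : ℕ} {C : ℝ}
    (hV : ∀ y, |V t y| ≤ C) (y : 𝒮) (a : 𝒜) (e : E) :
    |optimalMartingale 𝒦 ν V t y a e| ≤ 2 * C := by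
  have hI : |∫ e', V t (𝒦 t y a e') ∂ν| ≤ C := abs_integral_le_of_abs_le fun _ => hV _
  exact (abs_sub _ _).trans (by linarith [hV (𝒦 t y a e)])

theorem bddAbove_range_qValue [IsProbabilityMeasure ν] {t : ℕ} {y : 𝒮} {Rmax C : ℝ}
    (hR : ∀ a, |R t y a| ≤ Rmax) (hV : ∀ y, |V (t + 1) y| ≤ C) :
    BddAbove (range (qValue R 𝒦 ν V t y)) :=
  ⟨Rmax + C, forall_mem_range.2 fun a => add_le_add (abs_le.1 (hR a)).2
    (abs_le.1 (abs_integral_le_of_abs_le fun _ => hV _)).2⟩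

theorem pathwiseDual_optimalMartingale (hVH : ∀ y, V H y = F y) (es : ℕ → E) (a : ℕ → 𝒜) :
    pathwiseDual 𝒦 x R F H (optimalMartingale 𝒦 ν V) es a = V 0 x +
      ∑ t ∈ Finset.range H,
        (qValue R 𝒦 ν V t (traj 𝒦 x a es t) (a t) - V t (traj 𝒦 x a es t)) := by
  have hterm : ∀ t, R t (traj 𝒦 x a es t) (a t)
        - optimalMartingale 𝒦 ν V (t + 1) (traj 𝒦 x a es t) (a t) (es (t + 1))
      = (qValue R 𝒦 ν V t (traj 𝒦 x a es t) (a t) - V t (traj 𝒦 x a es t))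
        - (V (t + 1) (traj 𝒦 x a es (t + 1)) - V t (traj 𝒦 x a es t)) := fun t => by
    simp only [optimalMartingale, qValue, traj]
    ring
  rw [pathwiseDual, Finset.sum_congr rfl fun t _ => hterm t, Finset.sum_sub_distrib,
    Finset.sum_range_sub (fun t => V t (traj 𝒦 x a es t)), ← hVH, traj]
  ring

theorem pathwiseDual_optimalMartingale_le (hVH : ∀ y, V H y = F y)
    (hBell : ∀ t < H, ∀ y, V t y = ⨆ a, qValue R 𝒦 ν V t y a)
    (hQ : ∀ t < H, ∀ y, BddAbove (range (qValue R 𝒦 ν V t y))) (es : ℕ → E) (a : ℕ → 𝒜) :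
    pathwiseDual 𝒦 x R F H (optimalMartingale 𝒦 ν V) es a ≤ V 0 x := by
  have hgaps : ∑ t ∈ Finset.range H,
      (qValue R 𝒦 ν V t (traj 𝒦 x a es t) (a t) - V t (traj 𝒦 x a es t)) ≤ 0 := by
    refine Finset.sum_nonpos fun t ht => sub_nonpos.2 ?_
    rw [hBell t (Finset.mem_range.1 ht)]
    exact le_ciSup (hQ t (Finset.mem_range.1 ht) _) _
  rw [pathwiseDual_optimalMartingale hVH]
  linarith

theorem exists_sub_le_pathwiseDual_optimalMartingale [Nonempty 𝒜] (hVH : ∀ y, V H y = F y)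
    (hBell : ∀ t < H, ∀ y, V t y = ⨆ a, qValue R 𝒦 ν V t y a) (es : ℕ → E) {ε : ℝ}
    (hε : 0 < ε) : ∃ a, V 0 x - ε ≤ pathwiseDual 𝒦 x R F H (optimalMartingale 𝒦 ν V) es a := by
  set δ := ε / (H + 1)
  have hHδ : H * δ ≤ ε := by
    rw [mul_div_assoc', div_le_iff₀ (by positivity)]
    nlinarith
  have hgreedy : ∀ t y, ∃ b : 𝒜, t < H → V t y - δ ≤ qValue R 𝒦 ν V t y b := by
    intro t y
    by_cases ht : t < H
    · have hlt : V t y - δ < ⨆ b, qValue R 𝒦 ν V t y b := by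
        rw [← hBell t ht]
        linarith [show 0 < δ by positivity]
      obtain ⟨b, hb⟩ := exists_lt_of_lt_ciSup hlt
      exact ⟨b, fun _ => hb.le⟩
    · exact ⟨Classical.arbitrary 𝒜, fun h => absurd h ht⟩
  choose π hπ using hgreedy
  obtain ⟨a, ha⟩ := exists_openLoop_eq_feedback 𝒦 x es π
  have hgaps : (Finset.range H).card • (-δ) ≤ ∑ t ∈ Finset.range H,
      (qValue R 𝒦 ν V t (traj 𝒦 x a es t) (a t) - V t (traj 𝒦 x a es t)) := by
    refine Finset.card_nsmul_le_sum _ _ _ fun t ht => ?_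
    rw [ha t]
    linarith [hπ t (traj 𝒦 x a es t) (Finset.mem_range.1 ht)]
  rw [Finset.card_range, nsmul_eq_mul] at hgaps
  refine ⟨a, ?_⟩
  rw [pathwiseDual_optimalMartingale hVH]
  linarith

theorem isLUB_pathwiseDual_optimalMartingale [Nonempty 𝒜] (hVH : ∀ y, V H y = F y)
    (hBell : ∀ t < H, ∀ y, V t y = ⨆ a, qValue R 𝒦 ν V t y a)
    (hQ : ∀ t < H, ∀ y, BddAbove (range (qValue R 𝒦 ν V t y))) (es : ℕ → E) :
    IsLUB (range (pathwiseDual 𝒦 x R F H (optimalMartingale 𝒦 ν V) es)) (V 0 x) :=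
  ⟨forall_mem_range.2 (pathwiseDual_optimalMartingale_le hVH hBell hQ es),
    fun _ hb => le_of_forall_pos_le_add fun _ hε =>
      let ⟨a, ha⟩ := exists_sub_le_pathwiseDual_optimalMartingale (x := x) hVH hBell es hε
      by linarith [hb ⟨a, rfl⟩]⟩

end DynamicProgramming

theorem variance_bound_approximate_pathwise_dual_general
    {𝒮 𝒜 : Type*} [Nonempty 𝒜]
    {E : Type*} [mE : MeasurableSpace E]
    {Ω₀ : Type*} [MeasurableSpace Ω₀]
    (P₀ : Measure Ω₀) [IsProbabilityMeasure P₀]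
    (ν : Measure E) [IsProbabilityMeasure ν]
    (μE : Measure (ℕ → E)) [IsProbabilityMeasure μE]
    (H : ℕ) (x : 𝒮)
    (𝒦 : ℕ → 𝒮 → 𝒜 → E → 𝒮)
    (R : ℕ → 𝒮 → 𝒜 → ℝ) (F : 𝒮 → ℝ) (Rmax : ℝ)
    (hRb : ∀ t y a, |R t y a| ≤ Rmax)
    -- the optimal value functions (Bellman recursion), bounded
    (Vstar : ℕ → 𝒮 → ℝ)
    (hVstarH : ∀ y, Vstar H y = F y)
    (hBell : ∀ t, t < H → ∀ y,
      Vstar t y = ⨆ a : 𝒜, (R t y a + ∫ e, Vstar (t + 1) (𝒦 (t + 1) y a e) ∂ν))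
    (hVb : ∀ t y, |Vstar t y| ≤ ((H : ℝ) + 1) * Rmax)
    -- the approximate martingale functions `η̃`, bounded
    (ηtil : ℕ → Ω₀ → 𝒮 → 𝒜 → E → ℝ) (Bη : ℝ)
    (hηb : ∀ t ω₀ y a e, |ηtil t ω₀ y a e| ≤ Bη)
    -- the pathwise dual objective `Z̃` built from `η̃`
    (Z : Ω₀ × (ℕ → E) → ℝ)
    (hZ : ∀ w, Z w = ⨆ a : ℕ → 𝒜,
      (∑ t ∈ Finset.range H,
          (R t (traj 𝒦 x a w.2 t) (a t)
            - ηtil (t + 1) w.1 (traj 𝒦 x a w.2 t) (a t) (w.2 (t + 1)))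
        + F (traj 𝒦 x a w.2 H)))
    -- the uniform approximation errors `sup_{(x',a')} |η⋆_{t+1} − η̃_{t+1}|`
    (err : ℕ → Ω₀ × (ℕ → E) → ℝ)
    (herr : ∀ t w, err t w = ⨆ p : 𝒮 × 𝒜,
      |(Vstar (t + 1) (𝒦 (t + 1) p.1 p.2 (w.2 (t + 1)))
          - ∫ e, Vstar (t + 1) (𝒦 (t + 1) p.1 p.2 e) ∂ν)
        - ηtil (t + 1) w.1 p.1 p.2 (w.2 (t + 1))|)
    -- measurability of the pathwise suprema
    (hZm : AEStronglyMeasurable Z (P₀.prod μE))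
    (herrm : ∀ t, AEStronglyMeasurable (err t) (P₀.prod μE)) :
    variance Z (P₀.prod μE)
      ≤ (∫ w, (∑ t ∈ Finset.range H, err t w) ^ 2 ∂(P₀.prod μE)) ∧
    Real.sqrt (variance Z (P₀.prod μE))
      ≤ ∑ t ∈ Finset.range H,
          Real.sqrt (∫ w, (err t w) ^ 2 ∂(P₀.prod μE)) := by
  have : Nonempty 𝒮 := ⟨x⟩
  have hgap : ∀ t (w : Ω₀ × (ℕ → E)) (p : 𝒮 × 𝒜),
      |optimalMartingale 𝒦 ν Vstar (t + 1) p.1 p.2 (w.2 (t + 1))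
        - ηtil (t + 1) w.1 p.1 p.2 (w.2 (t + 1))| ≤ 2 * (((H : ℝ) + 1) * Rmax) + Bη :=
    fun t w p => (abs_sub _ _).trans
      (add_le_add (abs_optimalMartingale_le (hVb _) _ _ _) (hηb _ _ _ _ _))
  have herr_ge : ∀ t (w : Ω₀ × (ℕ → E)) y a,
      |optimalMartingale 𝒦 ν Vstar (t + 1) y a (w.2 (t + 1))
        - ηtil (t + 1) w.1 y a (w.2 (t + 1))| ≤ err t w := fun t w y a => by
    rw [herr]
    exact le_ciSup ⟨_, forall_mem_range.2 (hgap t w)⟩ (y, a)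
  have herrL2 : ∀ t, MemLp (err t) 2 (P₀.prod μE) := fun t =>
    .of_bound (herrm t) _ (.of_forall fun w => by
      rw [herr, Real.norm_eq_abs]
      exact abs_ciSup_le fun p => (abs_abs _).trans_le (hgap t w p))
  have hLUB : ∀ es, IsLUB (range (pathwiseDual 𝒦 x R F H (optimalMartingale 𝒦 ν Vstar) es))
      (Vstar 0 x) :=
    isLUB_pathwiseDual_optimalMartingale hVstarH hBell
      fun t _ y => bddAbove_range_qValue (hRb t y) (hVb (t + 1))
  have hdev : ∀ w, |Z w - Vstar 0 x| ≤ ∑ t ∈ Finset.range H, err t w := fun w => by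
    rw [hZ w]
    exact abs_ciSup_sub_le_of_isLUB (f := pathwiseDual 𝒦 x R F H (fun t => ηtil t w.1) w.2)
      (hLUB w.2) (abs_pathwiseDual_sub_le fun t _ y a =>
        (abs_sub_comm _ _).trans_le (herr_ge t w y a))
  have hvar := variance_le_integral_sq_of_abs_sub_le hZm
    (memLp_finsetSum _ fun t _ => herrL2 t).integrable_sq (.of_forall hdev)
  exact ⟨hvar, (Real.sqrt_le_sqrt hvar).trans (sqrt_integral_sum_sq_le fun t _ => herrL2 t)⟩

/-- **Variance and standard-deviation bound for the approximate pathwise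
dual.**  With `η⋆` the optimal martingale functions (for which the pathwise
dual objective is a.s. constant equal to `V₀⋆(x)`) and `η̃` any approximations,
the pathwise dual objective `Z̃` built from `η̃` satisfies
`Var[Z̃] ≤ E[(Σ_t sup_{(x',a')} |η⋆_{t+1} − η̃_{t+1}|)²]` and
`Dev[Z̃] ≤ Σ_t E[sup_{(x',a')} |η⋆_{t+1} − η̃_{t+1}|²]^{1/2}`. -/
theorem variance_bound_approximate_pathwise_dual
    {𝒮 𝒜 : Type*} [Nonempty 𝒜]
    {E : Type*} [mE : MeasurableSpace E]
    {Ω₀ : Type*} [MeasurableSpace Ω₀]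
    (P₀ : Measure Ω₀) [IsProbabilityMeasure P₀]
    (ν : Measure E) [IsProbabilityMeasure ν]
    (μE : Measure (ℕ → E)) [IsProbabilityMeasure μE]
    (hcoord : ∀ n, Measure.map (fun es : ℕ → E => es n) μE = ν)
    (hindep : iIndepFun (m := fun _ : ℕ => mE) (fun n (es : ℕ → E) => es n) μE)
    (H : ℕ) (x : 𝒮)
    (𝒦 : ℕ → 𝒮 → 𝒜 → E → 𝒮)
    (R : ℕ → 𝒮 → 𝒜 → ℝ) (F : 𝒮 → ℝ) (Rmax : ℝ) (hRmax : 0 ≤ Rmax)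
    (hRb : ∀ t y a, |R t y a| ≤ Rmax) (hFb : ∀ y, |F y| ≤ Rmax)
    -- the optimal value functions (Bellman recursion), bounded
    (Vstar : ℕ → 𝒮 → ℝ)
    (hVstarH : ∀ y, Vstar H y = F y)
    (hBell : ∀ t, t < H → ∀ y,
      Vstar t y = ⨆ a : 𝒜, (R t y a + ∫ e, Vstar (t + 1) (𝒦 (t + 1) y a e) ∂ν))
    (hVb : ∀ t y, |Vstar t y| ≤ ((H : ℝ) + 1) * Rmax)
    -- the approximate martingale functions `η̃`, bounded
    (ηtil : ℕ → Ω₀ → 𝒮 → 𝒜 → E → ℝ) (Bη : ℝ)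
    (hηb : ∀ t ω₀ y a e, |ηtil t ω₀ y a e| ≤ Bη)
    -- the pathwise dual objective `Z̃` built from `η̃`
    (Z : Ω₀ × (ℕ → E) → ℝ)
    (hZ : ∀ w, Z w = ⨆ a : ℕ → 𝒜,
      (∑ t ∈ Finset.range H,
          (R t (traj 𝒦 x a w.2 t) (a t)
            - ηtil (t + 1) w.1 (traj 𝒦 x a w.2 t) (a t) (w.2 (t + 1)))
        + F (traj 𝒦 x a w.2 H)))
    -- the uniform approximation errors `sup_{(x',a')} |η⋆_{t+1} − η̃_{t+1}|`
    (err : ℕ → Ω₀ × (ℕ → E) → ℝ)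
    (herr : ∀ t w, err t w = ⨆ p : 𝒮 × 𝒜,
      |(Vstar (t + 1) (𝒦 (t + 1) p.1 p.2 (w.2 (t + 1)))
          - ∫ e, Vstar (t + 1) (𝒦 (t + 1) p.1 p.2 e) ∂ν)
        - ηtil (t + 1) w.1 p.1 p.2 (w.2 (t + 1))|)
    -- measurability of the pathwise suprema
    (hZm : AEStronglyMeasurable Z (P₀.prod μE))
    (herrm : ∀ t, AEStronglyMeasurable (err t) (P₀.prod μE)) :
    variance Z (P₀.prod μE)
      ≤ (∫ w, (∑ t ∈ Finset.range H, err t w) ^ 2 ∂(P₀.prod μE)) ∧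
    Real.sqrt (variance Z (P₀.prod μE))
      ≤ ∑ t ∈ Finset.range H,
          Real.sqrt (∫ w, (err t w) ^ 2 ∂(P₀.prod μE)) :=
  variance_bound_approximate_pathwise_dual_general (mE := mE) P₀ ν μE H x 𝒦 R F Rmax hRb Vstar
    hVstarH hBell hVb ηtil Bη hηb Z hZ err herr hZm herrm
end
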